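/- arXiv:1608.08074 — 7 statements merged into one kernel-verified Lean document; each statement's English description precedes it below -/
import Mathlib

section
/- If ρ is a semi-ultrametric on ℕ (i.e., a pseudometric satisfying the strong triangle inequality max{ρ(x,y),ρ(y,z)} ≥ ρ(x,z)), and one defines v(i) = (1/2)·inf_{j≠i} ρ(i,j) and r(i,j) = (ρ(i,j) − v(i) − v(j))·1_{i≠j}, then r is a pseudometric on ℕ (nonnegative, symmetric, zero on the diagonal, and satisfying the triangle inequality). -/
/-- The external branch length vector: `Υ(ρ)(i) = (1/2) inf_{j ≠ i} ρ(i,j)`. -/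
noncomputable def extBranch (ρ : ℕ → ℕ → ℝ) (i : ℕ) : ℝ :=
  (1 / 2) * ⨅ j : {j : ℕ // j ≠ i}, ρ i (j : ℕ)

/-!
All that is used about `v = Υ(ρ)` is `2 v(i) ≤ ρ(i,j)` for `j ≠ i`. Nonnegativity of `r` follows
by adding this bound at both endpoints. For the triangle inequality through a middle point `j`,
the strong triangle inequality bounds `ρ(i,k)` by the larger of `ρ(i,j)`, `ρ(j,k)`, while the
smaller one is at least `2 v(j)`, which is exactly what `r(i,j) + r(j,k)` subtracts at `j`.
-/

lemma two_mul_extBranch_le {ρ : ℕ → ℕ → ℝ} (hnonneg : ∀ i j, 0 ≤ ρ i j) {i j : ℕ}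
    (hij : i ≠ j) : 2 * extBranch ρ i ≤ ρ i j := by
  have hbdd : BddBelow (Set.range fun k : {k : ℕ // k ≠ i} => ρ i k) :=
    ⟨0, by rintro _ ⟨k, rfl⟩; exact hnonneg i k⟩
  have := ciInf_le hbdd ⟨j, hij.symm⟩
  rw [extBranch]
  linarith

section ReducedDist

variable {α : Type*} [DecidableEq α] (ρ : α → α → ℝ) (v : α → ℝ)

def reducedDist (i j : α) : ℝ :=
  if i = j then 0 else ρ i j - v i - v j

variable {ρ v}

@[simp]
lemma reducedDist_self (i : α) : reducedDist ρ v i i = 0 :=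
  if_pos rfl

lemma reducedDist_comm (hsymm : ∀ i j, ρ i j = ρ j i) (i j : α) :
    reducedDist ρ v i j = reducedDist ρ v j i := by
  by_cases hij : i = j
  · rw [hij]
  · rw [reducedDist, reducedDist, if_neg hij, if_neg (Ne.symm hij), hsymm]
    ring

lemma reducedDist_nonneg (hsymm : ∀ i j, ρ i j = ρ j i) (hv : ∀ i j, i ≠ j → 2 * v i ≤ ρ i j)
    (i j : α) : 0 ≤ reducedDist ρ v i j := by
  by_cases hij : i = j
  · rw [hij, reducedDist_self]
  · have hi := hv i j hij
    have hj := hv j i (Ne.symm hij)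
    rw [hsymm] at hj
    rw [reducedDist, if_neg hij]
    linarith

lemma reducedDist_triangle (hsymm : ∀ i j, ρ i j = ρ j i)
    (hv : ∀ i j, i ≠ j → 2 * v i ≤ ρ i j) (hultra : ∀ i j k, ρ i j ≤ max (ρ i k) (ρ k j))
    (i j k : α) :
    reducedDist ρ v i k ≤ reducedDist ρ v i j + reducedDist ρ v j k := by
  by_cases hij : i = j
  · simp [hij]
  by_cases hjk : j = k
  · simp [hjk]
  by_cases hik : i = k
  · rw [← hik, reducedDist_self, reducedDist_comm hsymm j i]
    linarith [reducedDist_nonneg hsymm hv i j]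
  have hvji := hv j i (Ne.symm hij)
  have hvjk := hv j k hjk
  rw [hsymm] at hvji
  have hmax := hultra i k j
  simp only [reducedDist, if_neg hij, if_neg hjk, if_neg hik]
  rcases max_cases (ρ i j) (ρ j k) with ⟨h, _⟩ | ⟨h, _⟩ <;> rw [h] at hmax <;> linarith

end ReducedDist

theorem stmt0_general (ρ : ℕ → ℕ → ℝ)
    (hnonneg : ∀ i j, 0 ≤ ρ i j)
    (hsymm : ∀ i j, ρ i j = ρ j i)
    (hultra : ∀ i j k, ρ i j ≤ max (ρ i k) (ρ k j)) :
    ∀ r : ℕ → ℕ → ℝ,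
      (r = fun i j => if i = j then 0 else ρ i j - extBranch ρ i - extBranch ρ j) →
      (∀ i j, 0 ≤ r i j) ∧ (∀ i j, r i j = r j i) ∧ (∀ i, r i i = 0) ∧
        (∀ i j k, r i k ≤ r i j + r j k) := by
  rintro r rfl
  have hv : ∀ i j, i ≠ j → 2 * extBranch ρ i ≤ ρ i j := fun _ _ hij =>
    two_mul_extBranch_le hnonneg hij
  exact ⟨reducedDist_nonneg hsymm hv, reducedDist_comm hsymm, reducedDist_self,
    reducedDist_triangle hsymm hv hultra⟩

/-- If `ρ` is a semi-ultrametric on `ℕ`, and `v(i) = (1/2) inf_{j≠i} ρ(i,j)`,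
`r(i,j) = (ρ(i,j) − v(i) − v(j))·1_{i≠j}`, then `r` is a pseudometric. -/
theorem stmt0 (ρ : ℕ → ℕ → ℝ)
    (hdiag : ∀ i, ρ i i = 0)
    (hnonneg : ∀ i j, 0 ≤ ρ i j)
    (hsymm : ∀ i j, ρ i j = ρ j i)
    (hultra : ∀ i j k, ρ i j ≤ max (ρ i k) (ρ k j)) :
    ∀ r : ℕ → ℕ → ℝ,
      (r = fun i j => if i = j then 0 else ρ i j - extBranch ρ i - extBranch ρ j) →
      (∀ i j, 0 ≤ r i j) ∧ (∀ i j, r i j = r j i) ∧ (∀ i, r i i = 0) ∧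
        (∀ i j k, r i k ≤ r i j + r j k) :=
  stmt0_general ρ hnonneg hsymm hultra
end

section
/- Let (X,ρ) be an ultrametric space and define on ℝ≥0 × X the function d((s,i),(t,j)) = max{ρ(i,j) − s − t, |s−t|}. Then d is a pseudometric on ℝ≥0 × X. -/
open scoped NNReal

section ConeDist

variable {X : Type*} [PseudoMetricSpace X]

noncomputable def coneDist (p q : ℝ × X) : ℝ :=
  max (dist p.2 q.2 - p.1 - q.1) |p.1 - q.1|

theorem dist_sub_sub_le_coneDist (p q : ℝ × X) : dist p.2 q.2 - p.1 - q.1 ≤ coneDist p q :=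
  le_max_left _ _

theorem abs_sub_le_coneDist (p q : ℝ × X) : |p.1 - q.1| ≤ coneDist p q :=
  le_max_right _ _

theorem coneDist_nonneg (p q : ℝ × X) : 0 ≤ coneDist p q :=
  (abs_nonneg _).trans (abs_sub_le_coneDist p q)

theorem coneDist_self {p : ℝ × X} (hp : 0 ≤ p.1) : coneDist p p = 0 := by
  rw [coneDist, dist_self, sub_self, abs_zero]
  exact max_eq_right (by linarith)

theorem coneDist_comm (p q : ℝ × X) : coneDist p q = coneDist q p := by
  rw [coneDist, coneDist, dist_comm, abs_sub_comm, sub_right_comm]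

/-- The ultrametric inequality reduces the first term of `coneDist p r` to that of `coneDist p q`
or of `coneDist q r`; the height defect is then absorbed by the second term of the other one. -/
theorem coneDist_triangle [IsUltrametricDist X] (p q r : ℝ × X) :
    coneDist p r ≤ coneDist p q + coneDist q r := by
  have hpq := dist_sub_sub_le_coneDist p q
  have hqr := dist_sub_sub_le_coneDist q r
  have hpq' := abs_sub_le_coneDist p q
  have hqr' := abs_sub_le_coneDist q r
  refine max_le ?_ ((abs_sub_le _ _ _).trans (add_le_add hpq' hqr'))
  rcases le_max_iff.mp (IsUltrametricDist.dist_triangle_max p.2 q.2 r.2) with h | h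
  · linarith [le_abs_self (q.1 - r.1)]
  · linarith [neg_abs_le (p.1 - q.1)]

end ConeDist

/-- For an ultrametric space `(X,ρ)`, the function
`d((s,i),(t,j)) = max (ρ(i,j) − s − t) |s − t|` is a pseudometric on `ℝ≥0 × X`. -/
theorem stmt2 {X : Type*} [MetricSpace X]
    (hultra : ∀ x y z : X, dist x z ≤ max (dist x y) (dist y z)) :
    ∀ d : ℝ≥0 × X → ℝ≥0 × X → ℝ,
      (d = fun p q => max (dist p.2 q.2 - (p.1 : ℝ) - (q.1 : ℝ)) |(p.1 : ℝ) - (q.1 : ℝ)|) →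
      (∀ p, d p p = 0) ∧ (∀ p q, 0 ≤ d p q) ∧ (∀ p q, d p q = d q p) ∧
        (∀ p q s, d p s ≤ d p q + d q s) := by
  rintro d rfl
  have : IsUltrametricDist X := ⟨hultra⟩
  let lift : ℝ≥0 × X → ℝ × X := Prod.map (↑) id
  exact ⟨fun p => coneDist_self (p := lift p) p.1.coe_nonneg,
    fun p q => coneDist_nonneg (lift p) (lift q),
    fun p q => coneDist_comm (lift p) (lift q),
    fun p q s => coneDist_triangle (lift p) (lift q) (lift s)⟩
end

section
/- Let (X,r') be a complete separable metric space and m a Borel probability measure on X × ℝ≥0. Let ((x(i),v(i)))_{i∈ℕ} be an i.i.d. sequence with distribution m, set r(i,j) = r'(x(i),x(j)) and ρ(i,j) = (v(i) + r(i,j) + v(j))·1_{i≠j}. Assume ρ is almost surely a semi-ultrametric on ℕ. Then almost surely, for every i, v(i) = (1/2)·inf_{j≠i} ρ(i,j). -/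
open MeasureTheory ProbabilityTheory
open scoped NNReal
open Filter Topology

/-! Almost surely every sample `Y i` lies in the support of `m`, and by the second Borel–Cantelli
lemma the sequence returns infinitely often to every neighbourhood of a support point, so each
`Y i` is a cluster point of the sequence. Along a subsequence `Y (ψ n) → Y i` we get
`ρ(i, ψ n) → 2 v(i)` and `ρ(j, ψ n) → ρ(i, j)`; the strong triangle inequality
`ρ(i, ψ n) ≤ max (ρ(i, j), ρ(j, ψ n))` then gives `2 v(i) ≤ ρ(i, j)` in the limit, while the
values `ρ(i, ψ n)` themselves show that the infimum is at most `2 v(i)`. -/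

namespace ProbabilityTheory

variable {Ω E : Type*} [MeasurableSpace Ω] {μ : Measure Ω} [MeasurableSpace E] {m : Measure E}
  {Y : ℕ → Ω → E}

lemma iIndepFun.ae_frequently_mem (hmeas : ∀ i, Measurable (Y i)) (hindep : iIndepFun Y μ)
    (hlaw : ∀ i, μ.map (Y i) = m) {U : Set E} (hU : MeasurableSet U) (hpos : m U ≠ 0) :
    ∀ᵐ ω ∂μ, ∃ᶠ k in atTop, Y k ω ∈ U := by
  have := hindep.isProbabilityMeasure
  have hlawU : ∀ k, μ (Y k ⁻¹' U) = m U := fun k ↦ by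
    rw [← hlaw k, Measure.map_apply (hmeas k) hU]
  have hsets : iIndepSet (fun k ↦ Y k ⁻¹' U) μ :=
    (iIndepSet_iff_meas_biInter fun k ↦ hmeas k hU).2 fun s ↦
      hindep.measure_inter_preimage_eq_mul s fun _ _ ↦ hU
  have hlimsup : μ (limsup (fun k ↦ Y k ⁻¹' U) atTop) = 1 :=
    measure_limsup_eq_one (fun k ↦ hmeas k hU) hsets <| by
      simpa only [hlawU] using ENNReal.tsum_const_eq_top_of_ne_zero hpos
  have hae : ∀ᵐ ω ∂μ, ω ∈ limsup (fun k ↦ Y k ⁻¹' U) atTop :=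
    (ae_mem_iff_measure_eq
      (MeasurableSet.measurableSet_limsup fun k ↦ hmeas k hU).nullMeasurableSet).2
        (by rw [hlimsup, measure_univ])
  filter_upwards [hae] with ω hω
  exact mem_limsup_iff_frequently_mem.1 hω

lemma ae_forall_mem_support [TopologicalSpace E] [HereditarilyLindelofSpace E]
    (hmeas : ∀ i, Measurable (Y i)) (hlaw : ∀ i, μ.map (Y i) = m) :
    ∀ᵐ ω ∂μ, ∀ i, Y i ω ∈ m.support :=
  ae_all_iff.2 fun i ↦ ae_of_ae_map (hmeas i).aemeasurable <| by
    rw [hlaw i]; exact Measure.support_mem_ae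

variable [TopologicalSpace E] [SecondCountableTopology E] [OpensMeasurableSpace E]

lemma iIndepFun.ae_mapClusterPt_of_mem_support (hmeas : ∀ i, Measurable (Y i))
    (hindep : iIndepFun Y μ) (hlaw : ∀ i, μ.map (Y i) = m) :
    ∀ᵐ ω ∂μ, ∀ x ∈ m.support, MapClusterPt x atTop (fun k ↦ Y k ω) := by
  obtain ⟨B, hBc, -, hB⟩ := TopologicalSpace.exists_countable_basis E
  have hfreq : ∀ᵐ ω ∂μ, ∀ U ∈ B, m U ≠ 0 → ∃ᶠ k in atTop, Y k ω ∈ U := by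
    rw [ae_ball_iff hBc]
    intro U hU
    by_cases hpos : m U = 0
    · exact ae_of_all _ fun _ h ↦ absurd hpos h
    · filter_upwards [hindep.ae_frequently_mem hmeas hlaw (hB.isOpen hU).measurableSet hpos]
        with ω hω _ using hω
  filter_upwards [hfreq] with ω hω x hx
  refine mapClusterPt_iff_frequently.2 fun W hW ↦ ?_
  obtain ⟨U, hUB, hxU, hUW⟩ := hB.mem_nhds_iff.1 hW
  have hpos := (Measure.mem_support_iff_forall x).1 hx U ((hB.isOpen hUB).mem_nhds hxU)
  exact (hω U hUB hpos.ne').mono fun _ hk ↦ hUW hk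

lemma iIndepFun.ae_forall_mapClusterPt (hmeas : ∀ i, Measurable (Y i)) (hindep : iIndepFun Y μ)
    (hlaw : ∀ i, μ.map (Y i) = m) :
    ∀ᵐ ω ∂μ, ∀ i, MapClusterPt (Y i ω) atTop (fun k ↦ Y k ω) := by
  filter_upwards [hindep.ae_mapClusterPt_of_mem_support hmeas hlaw,
    ae_forall_mem_support hmeas hlaw] with ω hcl hsupp i using hcl _ (hsupp i)

end ProbabilityTheory

section MarkedDist

variable {X : Type*} [PseudoMetricSpace X] (z : ℕ → X × ℝ≥0)

def markedDist (i j : ℕ) : ℝ :=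
  if i = j then 0 else (z i).2 + dist (z i).1 (z j).1 + (z j).2

lemma markedDist_comm (i j : ℕ) : markedDist z i j = markedDist z j i := by
  by_cases h : i = j
  · subst h; rfl
  · simp only [markedDist, h, Ne.symm h, if_false, dist_comm]
    ring

lemma markedDist_nonneg (i j : ℕ) : 0 ≤ markedDist z i j := by
  unfold markedDist; split_ifs <;> positivity

variable {z}

lemma tendsto_markedDist {ψ : ℕ → ℕ} (hψ : Tendsto ψ atTop atTop) {p : X × ℝ≥0}
    (hz : Tendsto (z ∘ ψ) atTop (𝓝 p)) (i : ℕ) :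
    Tendsto (fun n ↦ markedDist z i (ψ n)) atTop (𝓝 ((z i).2 + dist (z i).1 p.1 + p.2)) := by
  have hcont : Continuous fun q : X × ℝ≥0 ↦ ((z i).2 : ℝ) + dist (z i).1 q.1 + q.2 := by
    fun_prop
  refine (hcont.tendsto p |>.comp hz).congr' ?_
  filter_upwards [hψ.eventually_ne_atTop i] with n hn
  simp [markedDist, Ne.symm hn]

lemma tendsto_markedDist_self {ψ : ℕ → ℕ} (hψ : Tendsto ψ atTop atTop) {i : ℕ}
    (hz : Tendsto (z ∘ ψ) atTop (𝓝 (z i))) :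
    Tendsto (fun n ↦ markedDist z i (ψ n)) atTop (𝓝 (2 * (z i).2)) := by
  simpa [two_mul] using tendsto_markedDist hψ hz i

lemma iInf_markedDist_le {i : ℕ} (hi : MapClusterPt (z i) atTop z) :
    ⨅ j : {j : ℕ // j ≠ i}, markedDist z i j ≤ 2 * ((z i).2 : ℝ) := by
  obtain ⟨ψ, hψ, hlim⟩ := hi.tendsto_subseq
  refine ge_of_tendsto (tendsto_markedDist_self hψ.tendsto_atTop hlim) ?_
  filter_upwards [hψ.tendsto_atTop.eventually_ne_atTop i] with n hn
  exact ciInf_le (f := fun j : {j : ℕ // j ≠ i} ↦ markedDist z i j)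
    ⟨0, Set.forall_mem_range.2 fun j ↦ markedDist_nonneg z i j⟩ ⟨ψ n, hn⟩

variable (hultra : ∀ i j k, markedDist z i j ≤ max (markedDist z i k) (markedDist z k j))
include hultra

lemma two_mul_le_markedDist {i : ℕ} (hi : MapClusterPt (z i) atTop z) {j : ℕ} (hji : j ≠ i) :
    2 * ((z i).2 : ℝ) ≤ markedDist z i j := by
  obtain ⟨ψ, hψ, hlim⟩ := hi.tendsto_subseq
  have hjk : Tendsto (fun n ↦ markedDist z j (ψ n)) atTop (𝓝 (markedDist z i j)) := by
    rw [markedDist_comm, markedDist, if_neg hji]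
    exact tendsto_markedDist hψ.tendsto_atTop hlim j
  have hmax := (tendsto_const_nhds (x := markedDist z i j)).max hjk
  rw [max_self] at hmax
  exact le_of_tendsto_of_tendsto' (tendsto_markedDist_self hψ.tendsto_atTop hlim) hmax
    fun n ↦ hultra i (ψ n) j

theorem mark_eq_half_iInf_markedDist {i : ℕ} (hi : MapClusterPt (z i) atTop z) :
    ((z i).2 : ℝ) = 1 / 2 * ⨅ j : {j : ℕ // j ≠ i}, markedDist z i j := by
  have : Nonempty {j : ℕ // j ≠ i} := ⟨⟨i + 1, by omega⟩⟩
  have hinf : ⨅ j : {j : ℕ // j ≠ i}, markedDist z i j = 2 * (z i).2 :=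
    le_antisymm (iInf_markedDist_le hi) (le_ciInf fun j ↦ two_mul_le_markedDist hultra hi j.2)
  rw [hinf]
  ring

end MarkedDist

theorem stmt4_general {X : Type*} [MetricSpace X]
    [TopologicalSpace.SeparableSpace X] [MeasurableSpace X] [BorelSpace X]
    {Ω : Type*} [MeasurableSpace Ω] (μ : Measure Ω)
    (m : Measure (X × ℝ≥0))
    (Y : ℕ → Ω → X × ℝ≥0)
    (hmeas : ∀ i, Measurable (Y i))
    (hindep : iIndepFun Y μ)
    (hlaw : ∀ i, Measure.map (Y i) μ = m)
    (ρ : Ω → ℕ → ℕ → ℝ)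
    (hρ : ∀ ω i j, ρ ω i j =
      if i = j then 0
      else ((Y i ω).2 : ℝ) + dist (Y i ω).1 (Y j ω).1 + ((Y j ω).2 : ℝ))
    (hultra : ∀ᵐ ω ∂μ, ∀ i j k, ρ ω i j ≤ max (ρ ω i k) (ρ ω k j)) :
    ∀ᵐ ω ∂μ, ∀ i, ((Y i ω).2 : ℝ) = (1 / 2) * ⨅ j : {j : ℕ // j ≠ i}, ρ ω i (j : ℕ) := by
  have : SecondCountableTopology X := UniformSpace.secondCountable_of_separable X
  have hρ_eq : ∀ ω, ρ ω = markedDist fun i ↦ Y i ω := fun ω ↦ funext₂ (hρ ω)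
  filter_upwards [hultra, hindep.ae_forall_mapClusterPt hmeas hlaw] with ω hω hcl i
  rw [hρ_eq] at hω ⊢
  exact mark_eq_half_iInf_markedDist hω (hcl i)

/-- Sampling from a marked metric measure space: if `((x(i),v(i)))` is an i.i.d. sequence
with distribution `m` on `X × ℝ≥0`, `ρ(i,j) = (v(i) + r'(x(i),x(j)) + v(j))·1_{i≠j}` is
a.s. a semi-ultrametric, then a.s. `v(i) = (1/2) inf_{j≠i} ρ(i,j)` for every `i`. -/
theorem stmt4 {X : Type*} [MetricSpace X] [CompleteSpace X]
    [TopologicalSpace.SeparableSpace X] [MeasurableSpace X] [BorelSpace X]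
    {Ω : Type*} [MeasurableSpace Ω] (μ : Measure Ω) [IsProbabilityMeasure μ]
    (m : Measure (X × ℝ≥0)) [IsProbabilityMeasure m]
    (Y : ℕ → Ω → X × ℝ≥0)
    (hmeas : ∀ i, Measurable (Y i))
    (hindep : iIndepFun Y μ)
    (hlaw : ∀ i, Measure.map (Y i) μ = m)
    (ρ : Ω → ℕ → ℕ → ℝ)
    (hρ : ∀ ω i j, ρ ω i j =
      if i = j then 0
      else ((Y i ω).2 : ℝ) + dist (Y i ω).1 (Y j ω).1 + ((Y j ω).2 : ℝ))
    (hultra : ∀ᵐ ω ∂μ, ∀ i j k, ρ ω i j ≤ max (ρ ω i k) (ρ ω k j)) :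
    ∀ᵐ ω ∂μ, ∀ i, ((Y i ω).2 : ℝ) = (1 / 2) * ⨅ j : {j : ℕ // j ≠ i}, ρ ω i (j : ℕ) :=
  stmt4_general μ m Y hmeas hindep hlaw ρ hρ hultra
end

section
/- Let (Z,d) be a separable metric space, μ a Borel probability measure on Z, and (z_i)_{i∈ℕ} an i.i.d. sequence with distribution μ. Then almost surely, for every i ∈ ℕ and every ε > 0, there exists j ≠ i with d(z_i, z_j) ≤ ε. -/
/-!
A set `B` of positive `ν`-measure is hit by infinitely many sample points almost surely (second
Borel–Cantelli lemma), while a `ν`-null set is almost surely hit by none. So for each measurable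
`B`, almost surely no sample point is the only one in `B`. A separable metric space is second
countable, so this holds simultaneously for all sets of a countable basis, and every ball around
`z i` contains such a basis set containing `z i`.
-/

open MeasureTheory ProbabilityTheory Filter TopologicalSpace

namespace ProbabilityTheory

variable {Ω ι β : Type*} [MeasurableSpace Ω] [MeasurableSpace β] {μ : Measure Ω}

lemma iIndepFun.iIndepSet_preimage {z : ι → Ω → β} (hindep : iIndepFun z μ)
    (hmeas : ∀ i, Measurable (z i)) {s : ι → Set β} (hs : ∀ i, MeasurableSet (s i)) :
    iIndepSet (fun i ↦ z i ⁻¹' s i) μ :=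
  (iIndepSet_iff_meas_biInter fun i ↦ hmeas i (hs i)).2 fun t ↦
    hindep.measure_inter_preimage_eq_mul t fun i _ ↦ hs i

variable [IsProbabilityMeasure μ] {z : ℕ → Ω → β} {ν : Measure β}

lemma ae_frequently_mem_of_measure_ne_zero (hmeas : ∀ i, Measurable (z i))
    (hindep : iIndepFun z μ) (hlaw : ∀ i, μ.map (z i) = ν) {B : Set β}
    (hB : MeasurableSet B) (hνB : ν B ≠ 0) :
    ∀ᵐ ω ∂μ, ∃ᶠ j in atTop, z j ω ∈ B := by
  have hsum : ∑' j, μ (z j ⁻¹' B) = ⊤ := by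
    simp_rw [← Measure.map_apply (hmeas _) hB, hlaw]
    exact ENNReal.tsum_const_eq_top_of_ne_zero hνB
  have hlimsup := measure_limsup_eq_one (fun j ↦ hmeas j hB)
    (hindep.iIndepSet_preimage hmeas fun _ ↦ hB) hsum
  have hae : ∀ᵐ ω ∂μ, ω ∈ limsup (fun j ↦ z j ⁻¹' B) atTop :=
    (mem_ae_iff_prob_eq_one (MeasurableSet.measurableSet_limsup fun j ↦ hmeas j hB)).2 hlimsup
  filter_upwards [hae] with ω hω
  exact mem_limsup_iff_frequently_mem.1 hω

lemma ae_exists_ne_mem_of_mem (hmeas : ∀ i, Measurable (z i))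
    (hindep : iIndepFun z μ) (hlaw : ∀ i, μ.map (z i) = ν) {B : Set β}
    (hB : MeasurableSet B) :
    ∀ᵐ ω ∂μ, ∀ i, z i ω ∈ B → ∃ j ≠ i, z j ω ∈ B := by
  rcases eq_or_ne (ν B) 0 with hνB | hνB
  · have hnull : ∀ i, ∀ᵐ ω ∂μ, z i ω ∉ B := fun i ↦ by
      rw [ae_iff, ← hνB, ← hlaw i, Measure.map_apply (hmeas i) hB]
      simp_rw [not_not, Set.preimage]
    filter_upwards [ae_all_iff.2 hnull] with ω hω i hi
    exact absurd hi (hω i)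
  · filter_upwards [ae_frequently_mem_of_measure_ne_zero hmeas hindep hlaw hB hνB] with ω hω i _
    obtain ⟨j, hj, hjB⟩ := (frequently_atTop.1 hω) (i + 1)
    exact ⟨j, by omega, hjB⟩

end ProbabilityTheory

theorem stmt5_general {Z : Type*} [MetricSpace Z] [TopologicalSpace.SeparableSpace Z]
    [MeasurableSpace Z] [BorelSpace Z]
    {Ω : Type*} [MeasurableSpace Ω] (μ : Measure Ω) [IsProbabilityMeasure μ]
    (ν : Measure Z)
    (z : ℕ → Ω → Z)
    (hmeas : ∀ i, Measurable (z i))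
    (hindep : iIndepFun z μ)
    (hlaw : ∀ i, Measure.map (z i) μ = ν) :
    ∀ᵐ ω ∂μ, ∀ i : ℕ, ∀ ε : ℝ, 0 < ε → ∃ j, j ≠ i ∧ dist (z i ω) (z j ω) ≤ ε := by
  have hbasis : ∀ᵐ ω ∂μ, ∀ U ∈ countableBasis Z, ∀ i, z i ω ∈ U → ∃ j ≠ i, z j ω ∈ U :=
    (ae_ball_iff (countable_countableBasis Z)).2 fun U hU ↦
      ae_exists_ne_mem_of_mem hmeas hindep hlaw (isOpen_of_mem_countableBasis hU).measurableSet
  filter_upwards [hbasis] with ω hω i ε hε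
  obtain ⟨U, hU, hiU, hUball⟩ := (isBasis_countableBasis Z).mem_nhds_iff.1
    (Metric.ball_mem_nhds (z i ω) hε)
  obtain ⟨j, hji, hjU⟩ := hω U hU i hiU
  exact ⟨j, hji, (Metric.mem_ball'.1 (hUball hjU)).le⟩

/-- In a separable metric space, almost surely no point of an i.i.d. sample from a Borel
probability measure is isolated within the sample. -/
theorem stmt5 {Z : Type*} [MetricSpace Z] [TopologicalSpace.SeparableSpace Z]
    [MeasurableSpace Z] [BorelSpace Z]
    {Ω : Type*} [MeasurableSpace Ω] (μ : Measure Ω) [IsProbabilityMeasure μ]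
    (ν : Measure Z) [IsProbabilityMeasure ν]
    (z : ℕ → Ω → Z)
    (hmeas : ∀ i, Measurable (z i))
    (hindep : iIndepFun z μ)
    (hlaw : ∀ i, Measure.map (z i) μ = ν) :
    ∀ᵐ ω ∂μ, ∀ i : ℕ, ∀ ε : ℝ, 0 < ε → ∃ j, j ≠ i ∧ dist (z i ω) (z j ω) ≤ ε :=
  stmt5_general μ ν z hmeas hindep hlaw
end

section
/- Let n ∈ ℕ, let π be an exchangeable random partition of [n] = {1,…,n}, and let ρ be an exchangeable random element of ℝ^{n×n}, independent of π. Define the matrix π(ρ) by π(ρ)(i,j) = ρ(π(i),π(j)), where π(i) denotes the index k such that i lies in the k-th block of π when blocks are ordered by least elements. Then π(ρ) is exchangeable, i.e., for every permutation p of [n], the matrix (π(ρ)(p(i),p(j)))_{i,j} has the same distribution as π(ρ). -/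
open MeasureTheory ProbabilityTheory

open scoped Classical

/-- The least element of the block containing `i` in the partition `s` of `Fin n`. -/
noncomputable def blockMin {n : ℕ} (s : Setoid (Fin n)) (i : Fin n) : Fin n :=
  (Finset.univ.filter fun j => s.r i j).min'
    ⟨i, Finset.mem_filter.mpr ⟨Finset.mem_univ i, s.iseqv.refl i⟩⟩

/-- The (0-indexed) rank of the block containing `i`, when the blocks of `s` are ordered
by their least elements. -/
noncomputable def blockIdx {n : ℕ} (s : Setoid (Fin n)) (i : Fin n) : Fin n :=
  ⟨((Finset.univ.image (blockMin s)).filter fun m => m < blockMin s i).card, by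
    have h1 : blockMin s i ∉
        (Finset.univ.image (blockMin s)).filter fun m => m < blockMin s i := by
      simp
    have h2 : ((Finset.univ.image (blockMin s)).filter fun m => m < blockMin s i) ≠
        Finset.univ := fun h => (h ▸ h1) (Finset.mem_univ _)
    simpa using Finset.card_lt_card (Finset.ssubset_univ_iff.mpr h2)⟩

/-- The action of a permutation `p` on a partition `s` of `Fin n`:
`a,b` lie in a common block of `p(s)` iff `p⁻¹(a), p⁻¹(b)` lie in a common block of `s`. -/
def permSetoid {n : ℕ} (p : Equiv.Perm (Fin n)) (s : Setoid (Fin n)) : Setoid (Fin n) :=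
  ⟨fun a b => s.r (p.symm a) (p.symm b),
    ⟨fun _ => s.iseqv.refl _, fun h => s.iseqv.symm h, fun h h' => s.iseqv.trans h h'⟩⟩

instance {n : ℕ} : MeasurableSpace (Setoid (Fin n)) := ⊤

lemma rel_blockMin {n : ℕ} (s : Setoid (Fin n)) (i : Fin n) : s.r i (blockMin s i) := by
  have := Finset.min'_mem (Finset.univ.filter fun j => s.r i j)
    ⟨i, Finset.mem_filter.mpr ⟨Finset.mem_univ i, s.iseqv.refl i⟩⟩
  exact (Finset.mem_filter.mp this).2

lemma blockMin_eq_iff {n : ℕ} (s : Setoid (Fin n)) (a b : Fin n) :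
    blockMin s a = blockMin s b ↔ s.r a b := by
  constructor
  · intro h
    have ha := rel_blockMin s a
    have hb := rel_blockMin s b
    rw [h] at ha
    exact s.iseqv.trans ha (s.iseqv.symm hb)
  · intro h
    have : (Finset.univ.filter fun j => s.r a j) = Finset.univ.filter fun j => s.r b j := by
      apply Finset.filter_congr
      intro j _
      exact ⟨fun hj => s.iseqv.trans (s.iseqv.symm h) hj, fun hj => s.iseqv.trans h hj⟩
    unfold blockMin
    congr 1

lemma blockIdx_lt {n : ℕ} (s : Setoid (Fin n)) (a b : Fin n)
    (h : blockMin s a < blockMin s b) : (blockIdx s a : ℕ) < (blockIdx s b : ℕ) := by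
  show ((Finset.univ.image (blockMin s)).filter fun m => m < blockMin s a).card <
    ((Finset.univ.image (blockMin s)).filter fun m => m < blockMin s b).card
  apply Finset.card_lt_card
  constructor
  · intro m hm
    rw [Finset.mem_filter] at hm ⊢
    exact ⟨hm.1, lt_trans hm.2 h⟩
  · intro hsub
    have hmem : blockMin s a ∈ (Finset.univ.image (blockMin s)).filter
        fun m => m < blockMin s b := by
      rw [Finset.mem_filter]
      exact ⟨Finset.mem_image.mpr ⟨a, Finset.mem_univ a, rfl⟩, h⟩
    have := hsub hmem
    rw [Finset.mem_filter] at this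
    exact lt_irrefl _ this.2

lemma blockIdx_eq_iff {n : ℕ} (s : Setoid (Fin n)) (a b : Fin n) :
    blockIdx s a = blockIdx s b ↔ s.r a b := by
  rw [← blockMin_eq_iff]
  constructor
  · intro h
    rcases lt_trichotomy (blockMin s a) (blockMin s b) with hlt | heq | hgt
    · exact absurd (Fin.val_eq_of_eq h) (Nat.ne_of_lt (blockIdx_lt s a b hlt))
    · exact heq
    · exact absurd (Fin.val_eq_of_eq h).symm (Nat.ne_of_lt (blockIdx_lt s b a hgt))
  · intro h
    unfold blockIdx
    simp only [h]

lemma exists_perm_comp {n : ℕ} (f g : Fin n → Fin n)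
    (h : ∀ i j, f i = f j ↔ g i = g j) :
    ∃ q : Equiv.Perm (Fin n), ∀ i, f i = q (g i) := by
  have hφ : ∀ x : {x // x ∈ Set.range g}, g x.2.choose = x.1 := fun x => x.2.choose_spec
  let φ : {x // x ∈ Set.range g} → {x // x ∈ Set.range f} :=
    fun x => ⟨f x.2.choose, ⟨x.2.choose, rfl⟩⟩
  have hinj : Function.Injective φ := by
    intro x y hxy
    apply Subtype.ext
    have : f x.2.choose = f y.2.choose := congrArg Subtype.val hxy
    rw [← hφ x, ← hφ y]
    exact (h _ _).mp this
  have hsurj : Function.Surjective φ := by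
    rintro ⟨-, i, rfl⟩
    refine ⟨⟨g i, ⟨i, rfl⟩⟩, Subtype.ext ?_⟩
    exact (h _ _).mpr (hφ ⟨g i, ⟨i, rfl⟩⟩)
  let e := Equiv.ofBijective φ ⟨hinj, hsurj⟩
  refine ⟨e.extendSubtype, fun i => ?_⟩
  rw [e.extendSubtype_apply_of_mem (g i) ⟨i, rfl⟩]
  exact ((h _ _).mpr (hφ ⟨g i, ⟨i, rfl⟩⟩)).symm

def permSetoidEquiv {n : ℕ} (p : Equiv.Perm (Fin n)) : Setoid (Fin n) ≃ Setoid (Fin n) where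
  toFun := permSetoid p
  invFun := permSetoid p⁻¹
  left_inv s := Setoid.ext fun a b => by
    show s _ _ ↔ _
    simp [permSetoid, Equiv.Perm.inv_def]
  right_inv s := Setoid.ext fun a b => by
    show s _ _ ↔ _
    simp [permSetoid, Equiv.Perm.inv_def]

instance {n : ℕ} : Finite (Setoid (Fin n)) :=
  Finite.of_injective (fun s : Setoid (Fin n) => s.r)
    (fun a b hab => Setoid.ext fun x y => by rw [show a.r = b.r from hab])

instance {n : ℕ} : MeasurableSingletonClass (Setoid (Fin n)) := ⟨fun _ => trivial⟩

lemma matMap_measurable {n : ℕ} (c : Fin n → Fin n) :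
    Measurable (fun r : Fin n → Fin n → ℝ => fun i j => r (c i) (c j)) :=
  measurable_pi_lambda _ fun i => measurable_pi_lambda _ fun j =>
    (measurable_pi_apply (c j)).comp (measurable_pi_apply (c i))

lemma decomp_measure {n : ℕ} {Ω : Type*} [MeasurableSpace Ω] (μ : Measure Ω)
    (P : Ω → Setoid (Fin n)) (ρ : Ω → Fin n → Fin n → ℝ)
    (hPmeas : Measurable P) (hρmeas : Measurable ρ) (hindep : IndepFun P ρ μ)
    (c : Setoid (Fin n) → Fin n → Fin n) {E : Set (Fin n → Fin n → ℝ)}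
    (hE : MeasurableSet E) :
    μ {ω | (fun i j => ρ ω (c (P ω) i) (c (P ω) j)) ∈ E}
      = ∑' s : Setoid (Fin n),
          μ (P ⁻¹' {s}) * μ (ρ ⁻¹' ((fun r (i j : Fin n) => r (c s i) (c s j)) ⁻¹' E)) := by
  have hset : {ω | (fun i j => ρ ω (c (P ω) i) (c (P ω) j)) ∈ E}
      = ⋃ s : Setoid (Fin n),
          (P ⁻¹' {s} ∩ ρ ⁻¹' ((fun r (i j : Fin n) => r (c s i) (c s j)) ⁻¹' E)) := by
    ext ω
    simp only [Set.mem_setOf_eq, Set.mem_iUnion, Set.mem_inter_iff, Set.mem_preimage,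
      Set.mem_singleton_iff]
    constructor
    · intro h
      exact ⟨P ω, rfl, h⟩
    · rintro ⟨s, rfl, h⟩
      exact h
  rw [hset, measure_iUnion]
  · apply tsum_congr
    intro s
    exact (indepFun_iff_measure_inter_preimage_eq_mul.mp hindep _ _
      (measurableSet_singleton s) ((matMap_measurable (c s)) hE))
  · intro s t hst
    apply Set.disjoint_left.mpr
    rintro ω ⟨hs, -⟩ ⟨ht, -⟩
    exact hst (hs.symm.trans ht)
  · intro s
    exact (hPmeas (measurableSet_singleton s)).inter (hρmeas ((matMap_measurable (c s)) hE))

/-- If `π` is an exchangeable random partition of `[n]` and `ρ` is an independent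
exchangeable random `n × n` real matrix, then the matrix `π(ρ)(i,j) = ρ(π(i),π(j))`
is exchangeable. -/
theorem stmt6 {n : ℕ} {Ω : Type*} [MeasurableSpace Ω] (μ : Measure Ω) [IsProbabilityMeasure μ]
    (P : Ω → Setoid (Fin n)) (ρ : Ω → Fin n → Fin n → ℝ)
    (hPmeas : Measurable P) (hρmeas : Measurable ρ)
    (hPexch : ∀ p : Equiv.Perm (Fin n),
      Measure.map (fun ω => permSetoid p (P ω)) μ = Measure.map P μ)
    (hρexch : ∀ p : Equiv.Perm (Fin n),
      Measure.map (fun ω => fun i j => ρ ω (p i) (p j)) μ = Measure.map ρ μ)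
    (hindep : IndepFun P ρ μ) :
    ∀ p : Equiv.Perm (Fin n),
      Measure.map (fun ω => fun i j => ρ ω (blockIdx (P ω) (p i)) (blockIdx (P ω) (p j))) μ
        = Measure.map (fun ω => fun i j => ρ ω (blockIdx (P ω) i) (blockIdx (P ω) j)) μ := by
  intro p
  have hjoint : ∀ c : Setoid (Fin n) → Fin n → Fin n,
      Measurable (fun ω => fun i j => ρ ω (c (P ω) i) (c (P ω) j)) := by
    intro c
    have : Measurable (fun x : (Fin n → Fin n → ℝ) × Setoid (Fin n) =>
        fun i j => x.1 (c x.2 i) (c x.2 j)) :=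
      measurable_from_prod_countable_left fun s => matMap_measurable (c s)
    exact this.comp (hρmeas.prodMk hPmeas)
  refine Measure.ext fun E hE => ?_
  rw [Measure.map_apply (hjoint fun s i => blockIdx s (p i)) hE,
    Measure.map_apply (hjoint fun s i => blockIdx s i) hE]
  have hL := decomp_measure μ P ρ hPmeas hρmeas hindep (fun s i => blockIdx s (p i)) hE
  have hR := decomp_measure μ P ρ hPmeas hρmeas hindep (fun s i => blockIdx s i) hE
  show μ {ω | _ ∈ E} = μ {ω | _ ∈ E}
  rw [hL, hR]
  -- abbreviations
  set φ : Setoid (Fin n) → Setoid (Fin n) := fun s => permSetoid p⁻¹ s with hφdef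
  have hφrel : ∀ (s : Setoid (Fin n)) (a b : Fin n), (φ s).r a b ↔ s.r (p a) (p b) := by
    intro s a b
    show s _ _ ↔ _
    simp [hφdef, permSetoid, Equiv.Perm.inv_def]
  -- invariance of the law of P
  have hA : ∀ s : Setoid (Fin n), μ (P ⁻¹' {s}) = μ (P ⁻¹' {φ s}) := by
    intro s
    have hmp : Measurable (fun ω => permSetoid p⁻¹ (P ω)) :=
      fun A _ => hPmeas (MeasurableSpace.measurableSet_top
        (s := permSetoid p⁻¹ ⁻¹' A))
    have h1 := congrArg (fun m : Measure (Setoid (Fin n)) => m {φ s}) (hPexch p⁻¹)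
    rw [Measure.map_apply hmp (measurableSet_singleton _),
      Measure.map_apply hPmeas (measurableSet_singleton _)] at h1
    have h2 : (fun ω => permSetoid p⁻¹ (P ω)) ⁻¹' {φ s} = P ⁻¹' {s} := by
      ext ω
      simp only [Set.mem_preimage, Set.mem_singleton_iff]
      exact ⟨fun h => (permSetoidEquiv p⁻¹).injective h, fun h => congrArg _ h⟩
    rw [h2] at h1
    exact h1
  -- per-s transformation of the matrix part
  have hB : ∀ s : Setoid (Fin n),
      μ (ρ ⁻¹' ((fun r (i j : Fin n) => r (blockIdx (φ s) i) (blockIdx (φ s) j)) ⁻¹' E))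
        = μ (ρ ⁻¹' ((fun r (i j : Fin n) => r (blockIdx s (p i)) (blockIdx s (p j))) ⁻¹' E)) := by
    intro s
    obtain ⟨q, hq⟩ := exists_perm_comp (fun i => blockIdx (φ s) i)
      (fun i => blockIdx s (p i)) (by
        intro i j
        rw [blockIdx_eq_iff, blockIdx_eq_iff]
        exact hφrel s i j)
    have hqmeas : Measurable (fun ω => fun i j => ρ ω (q i) (q j)) :=
      (matMap_measurable q).comp hρmeas
    have h1 := congrArg (fun m : Measure (Fin n → Fin n → ℝ) =>
      m ((fun r (i j : Fin n) => r (blockIdx s (p i)) (blockIdx s (p j))) ⁻¹' E)) (hρexch q)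
    rw [Measure.map_apply hqmeas
        ((matMap_measurable fun i => blockIdx s (p i)) hE),
      Measure.map_apply hρmeas
        ((matMap_measurable fun i => blockIdx s (p i)) hE)] at h1
    have h2 : (fun ω => fun i j => ρ ω (q i) (q j)) ⁻¹'
        ((fun r (i j : Fin n) => r (blockIdx s (p i)) (blockIdx s (p j))) ⁻¹' E)
        = ρ ⁻¹' ((fun r (i j : Fin n) => r (blockIdx (φ s) i) (blockIdx (φ s) j)) ⁻¹' E) := by
      ext ω
      simp only [Set.mem_preimage]
      have : (fun i j => (fun i j => ρ ω (q i) (q j)) (blockIdx s (p i)) (blockIdx s (p j)))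
          = fun i j => ρ ω (blockIdx (φ s) i) (blockIdx (φ s) j) := by
        funext i j
        rw [hq i, hq j]
      rw [this]
    rw [h2] at h1
    exact h1
  -- reindex the sum
  calc ∑' s : Setoid (Fin n), μ (P ⁻¹' {s}) *
        μ (ρ ⁻¹' ((fun r (i j : Fin n) => r (blockIdx s (p i)) (blockIdx s (p j))) ⁻¹' E))
      = ∑' s : Setoid (Fin n), μ (P ⁻¹' {φ s}) *
        μ (ρ ⁻¹' ((fun r (i j : Fin n) => r (blockIdx (φ s) i) (blockIdx (φ s) j)) ⁻¹' E)) := by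
        apply tsum_congr
        intro s
        rw [← hA s, hB s]
    _ = ∑' t : Setoid (Fin n), μ (P ⁻¹' {t}) *
        μ (ρ ⁻¹' ((fun r (i j : Fin n) => r (blockIdx t i) (blockIdx t j)) ⁻¹' E)) := by
        exact Equiv.tsum_eq (permSetoidEquiv p⁻¹) (fun t => μ (P ⁻¹' {t}) *
          μ (ρ ⁻¹' ((fun r (i j : Fin n) => r (blockIdx t i) (blockIdx t j)) ⁻¹' E)))
end

section
/- Let (X,r,m) be a marked metric measure space and let ((x(i),v(i)))_{i∈ℕ} be an i.i.d. sequence with distribution m. Set r̃(i,j) = r(x(i),x(j)). Then almost surely: the empirical measures n⁻¹Σ_{i=1}ⁿ δ_{(i,v(i))} on X̃ × ℝ≥0 converge weakly (where X̃ is the completion of (ℕ,r̃)), and the resulting marked metric measure space is isomorphic to (X,r,m) restricted to the support of m(·×ℝ≥0), i.e. it has the same marked distance matrix distribution as (X,r,m). -/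
open MeasureTheory ProbabilityTheory Filter
open scoped Topology ENNReal NNReal

/-- The Prohorov distance of two measures with respect to a distance function `d`. -/
noncomputable def prohorovDist {α : Type*} [MeasurableSpace α]
    (d : α → α → ℝ) (μ ν : Measure α) : ℝ :=
  sInf {ε : ℝ | 0 < ε ∧
    (∀ F : Set α, μ F ≤ ν {y | ∃ x ∈ F, d x y < ε} + ENNReal.ofReal ε) ∧
    (∀ F : Set α, ν F ≤ μ {y | ∃ x ∈ F, d x y < ε} + ENNReal.ofReal ε)}

/-- The `n`-th empirical measure `n⁻¹ ∑_{i<n} δ_{(i,v(i))}` on `ℕ × ℝ`. -/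
noncomputable def empMeas (v : ℕ → ℝ) (n : ℕ) : Measure (ℕ × ℝ) :=
  ((n : ℝ≥0∞))⁻¹ • ∑ i ∈ Finset.range n, Measure.dirac ((i, v i) : ℕ × ℝ)

/-! Almost surely, the strong law of large numbers holds simultaneously for the indicators of
a countable π-system of open sets containing arbitrarily small neighbourhoods of every point,
and this forces the empirical measures of the sample to converge weakly to `m` (Varadarajan).
Pushed forward along `(i, v) ↦ (x(i), v)`, the empirical measures on `ℕ × ℝ` therefore converge
in the Lévy–Prokhorov metric, so they are Prohorov–Cauchy for `r̃`. The `d`-fold product of an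
empirical measure is the uniform measure on `d`-tuples of sample points, and products of weakly
convergent sequences converge weakly; integrating a bounded continuous function of the distance
matrix and the marks gives convergence to its integral under `m^⊗d`, the law of the first `d`
sample points. -/

open scoped BoundedContinuousFunction

section

open Set

lemma Set.indicator_univ_pi_one {ι M : Type*} [Fintype ι] [CommMonoidWithZero M]
    {β : ι → Type*} (C : ∀ a, Set (β a)) (x : ∀ a, β a) :
    (univ.pi C).indicator 1 x = ∏ a, (C a).indicator (1 : β a → M) (x a) := by
  classical
  simp [indicator_apply, Finset.prod_boole]

lemma TopologicalSpace.exists_countable_isPiSystem_nhds_subset (E : Type*) [TopologicalSpace E]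
    [SecondCountableTopology E] :
    ∃ S : Set (Set E), S.Countable ∧ IsPiSystem S ∧ (∀ s ∈ S, IsOpen s) ∧
      ∀ u, IsOpen u → ∀ x ∈ u, ∃ s ∈ S, s ∈ 𝓝 x ∧ s ⊆ u := by
  obtain ⟨B, hBc, -, hB⟩ := exists_countable_basis E
  refine ⟨sInter '' {t | t.Finite ∧ t ⊆ B}, (countable_ofPred_finite_subset hBc).image _,
    ?_, ?_, ?_⟩
  · rintro - ⟨t, ⟨ht, htB⟩, rfl⟩ - ⟨t', ⟨ht', htB'⟩, rfl⟩ -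
    exact ⟨t ∪ t', ⟨ht.union ht', union_subset htB htB'⟩, sInter_union t t'⟩
  · rintro - ⟨t, ⟨ht, htB⟩, rfl⟩
    exact ht.isOpen_sInter fun b hb => hB.isOpen (htB hb)
  · intro u hu x hx
    obtain ⟨b, hbB, hxb, hbu⟩ := hB.exists_subset_of_mem_open hx hu
    exact ⟨b, ⟨{b}, ⟨finite_singleton b, singleton_subset_iff.2 hbB⟩, sInter_singleton b⟩,
      (hB.isOpen hbB).mem_nhds hxb, hbu⟩

end

namespace MeasureTheory

open Set Finset TopologicalSpace

section Empirical

variable {E : Type*} [MeasurableSpace E]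

noncomputable def empiricalMeasure (z : ℕ → E) (n : ℕ) : Measure E :=
  (n : ℝ≥0∞)⁻¹ • ∑ i ∈ range n, Measure.dirac (z i)

instance (z : ℕ → E) (n : ℕ) [NeZero n] : IsProbabilityMeasure (empiricalMeasure z n) := by
  constructor
  simp [empiricalMeasure, ENNReal.inv_mul_cancel, NeZero.ne]

noncomputable def empiricalProbabilityMeasure (z : ℕ → E) (n : ℕ) [NeZero n] :
    ProbabilityMeasure E :=
  ⟨empiricalMeasure z n, inferInstance⟩

lemma empiricalMeasure_apply_toReal (z : ℕ → E) (n : ℕ) {s : Set E} (hs : MeasurableSet s) :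
    (empiricalMeasure z n s).toReal = (∑ i ∈ range n, s.indicator 1 (z i)) / n := by
  have h : ∀ x, (s.indicator (1 : E → ℝ≥0∞) x).toReal = s.indicator 1 x := fun x => by
    by_cases hx : x ∈ s <;> simp [hx]
  simp only [empiricalMeasure, Measure.smul_apply, Measure.finsetSum_apply,
    Measure.dirac_apply' _ hs, smul_eq_mul, ENNReal.toReal_mul, ENNReal.toReal_inv,
    ENNReal.toReal_natCast, div_eq_inv_mul]
  rw [ENNReal.toReal_sum fun i _ => ?_]
  · simp only [h]
  · by_cases hx : z i ∈ s <;> simp [hx]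

lemma map_empiricalMeasure {F : Type*} [MeasurableSpace F] {f : E → F} (hf : Measurable f)
    (z : ℕ → E) (n : ℕ) : (empiricalMeasure z n).map f = empiricalMeasure (f ∘ z) n := by
  ext s hs
  simp only [empiricalMeasure, Measure.map_apply hf hs, Measure.smul_apply,
    Measure.finsetSum_apply, Measure.dirac_apply' _ (hf hs), Measure.dirac_apply' _ hs]
  rfl

lemma pi_empiricalMeasure (z : ℕ → E) (n d : ℕ) [NeZero n] :
    Measure.pi (fun _ : Fin d => empiricalMeasure z n) =
      ((n : ℝ≥0∞) ^ d)⁻¹ • ∑ ℓ : Fin d → Fin n, Measure.dirac (fun a => z (ℓ a)) := by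
  refine Measure.pi_eq fun C hC => ?_
  simp [empiricalMeasure, Measure.dirac_apply' _ (MeasurableSet.univ_pi hC),
    Measure.dirac_apply' _ (hC _), Set.indicator_univ_pi_one, Finset.sum_range,
    Finset.prod_mul_distrib, Fintype.prod_sum, ENNReal.inv_pow]

lemma integral_pi_empiricalMeasure (z : ℕ → E) (n d : ℕ) [NeZero n] {f : (Fin d → E) → ℝ}
    (hf : StronglyMeasurable f) :
    ∫ w, f w ∂(Measure.pi fun _ : Fin d => empiricalMeasure z n) =
      (∑ ℓ : Fin d → Fin n, f (fun a => z (ℓ a))) / (n : ℝ) ^ d := by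
  rw [pi_empiricalMeasure, integral_smul_measure,
    integral_finsetSum_measure fun ℓ _ => integrable_dirac' hf (by simp)]
  simp [integral_dirac' f _ hf, div_eq_inv_mul]

theorem tendsto_sum_div_pow_of_tendsto_empiricalProbabilityMeasure [TopologicalSpace E]
    [SecondCountableTopology E] [PseudoMetrizableSpace E] [OpensMeasurableSpace E]
    {z : ℕ → E} {m : ProbabilityMeasure E}
    (h : Tendsto (fun n => empiricalProbabilityMeasure z (n + 1)) atTop (𝓝 m)) (d : ℕ)
    (f : (Fin d → E) →ᵇ ℝ) :
    Tendsto (fun k : ℕ => (∑ ℓ : Fin d → Fin (k + 1), f (fun a => z (ℓ a))) / ((k + 1 : ℝ) ^ d))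
      atTop (𝓝 (∫ w, f w ∂(Measure.pi fun _ : Fin d => (m : Measure E)))) := by
  have hpi : Tendsto (fun n => ProbabilityMeasure.pi fun _ : Fin d =>
      empiricalProbabilityMeasure z (n + 1)) atTop (𝓝 (ProbabilityMeasure.pi fun _ => m)) :=
    (ProbabilityMeasure.continuous_pi.tendsto _).comp (tendsto_pi_nhds.2 fun _ => h)
  refine (ProbabilityMeasure.tendsto_iff_forall_integral_tendsto.1 hpi f).congr fun k => ?_
  rw [ProbabilityMeasure.toMeasure_pi]
  exact_mod_cast integral_pi_empiricalMeasure z (k + 1) d f.continuous.stronglyMeasurable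

end Empirical

section Sampling

variable {E Ω : Type*} [MeasurableSpace E] [MeasurableSpace Ω] {μ : Measure Ω}
  [IsProbabilityMeasure μ] {m : Measure E} {Y : ℕ → Ω → E}

lemma ae_tendsto_empiricalMeasure_apply (hmeas : ∀ i, Measurable (Y i))
    (hindep : Pairwise fun i j => IndepFun (Y i) (Y j) μ) (hlaw : ∀ i, μ.map (Y i) = m)
    {s : Set E} (hs : MeasurableSet s) :
    ∀ᵐ ω ∂μ, Tendsto (fun n => (empiricalMeasure (fun i => Y i ω) n s).toReal) atTop
      (𝓝 (m s).toReal) := by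
  have hind : Measurable (s.indicator (1 : E → ℝ)) := measurable_one.indicator hs
  have hint : Integrable (fun ω => s.indicator 1 (Y 0 ω)) μ :=
    (integrable_const (1 : ℝ)).mono' (hind.comp (hmeas 0)).aestronglyMeasurable
      (Eventually.of_forall fun ω => by by_cases h : Y 0 ω ∈ s <;> simp [h])
  have hident (i : ℕ) :
      IdentDistrib (fun ω => s.indicator 1 (Y i ω)) (fun ω => s.indicator 1 (Y 0 ω)) μ μ :=
    IdentDistrib.comp ⟨(hmeas i).aemeasurable, (hmeas 0).aemeasurable, by rw [hlaw, hlaw]⟩ hind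
  have hmean : μ[fun ω => s.indicator 1 (Y 0 ω)] = (m s).toReal := by
    rw [← integral_map (hmeas 0).aemeasurable hind.aestronglyMeasurable, hlaw,
      integral_indicator_one hs]
    rfl
  filter_upwards [strong_law_ae_real (fun i ω => s.indicator 1 (Y i ω)) hint
    (fun i j hij => (hindep hij).comp hind hind) hident] with ω hω
  simpa only [empiricalMeasure_apply_toReal _ _ hs, ← hmean] using hω

theorem ae_tendsto_empiricalProbabilityMeasure [TopologicalSpace E] [SecondCountableTopology E]
    [OpensMeasurableSpace E] [IsProbabilityMeasure m] (hmeas : ∀ i, Measurable (Y i))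
    (hindep : Pairwise fun i j => IndepFun (Y i) (Y j) μ) (hlaw : ∀ i, μ.map (Y i) = m) :
    ∀ᵐ ω ∂μ, Tendsto (fun n => empiricalProbabilityMeasure (fun i => Y i ω) (n + 1)) atTop
      (𝓝 ⟨m, ‹_›⟩) := by
  obtain ⟨S, hSc, hS, hSo, hSnhds⟩ := exists_countable_isPiSystem_nhds_subset E
  filter_upwards [(ae_ball_iff hSc).2 fun s hs =>
    ae_tendsto_empiricalMeasure_apply hmeas hindep hlaw (hSo s hs).measurableSet] with ω hω
  refine hS.tendsto_probabilityMeasure_of_tendsto_of_mem (fun s hs => (hSo s hs).measurableSet)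
    hSnhds fun s hs => ?_
  rw [← NNReal.tendsto_coe]
  exact (hω s hs).comp (tendsto_add_atTop_nat 1)

end Sampling

end MeasureTheory

section Prohorov

open Set Metric TopologicalSpace

lemma preimage_thickening_image {α G : Type*} [PseudoMetricSpace G] (ι : α → G)
    (F : Set α) (ε : ℝ) :
    ι ⁻¹' thickening ε (ι '' F) = {y | ∃ x ∈ F, dist (ι x) (ι y) < ε} := by
  ext y
  simp [mem_thickening_iff, dist_comm]

variable {α G : Type*} [MeasurableSpace α] [MetricSpace G] [MeasurableSpace G]
  [OpensMeasurableSpace G] {ι : α → G}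

lemma measure_le_measure_comap_thickening_of_levyProkhorovEDist_lt (hι : Measurable ι)
    {μ ν : Measure α} {ε : ℝ} (hε : 0 < ε)
    (h : levyProkhorovEDist (μ.map ι) (ν.map ι) < ENNReal.ofReal ε) (F : Set α) :
    μ F ≤ ν {y | ∃ x ∈ F, dist (ι x) (ι y) < ε} + ENNReal.ofReal ε := by
  have hF : μ F ≤ μ.map ι (closure (ι '' F)) := by
    rw [Measure.map_apply hι measurableSet_closure]
    exact measure_mono fun x hx => subset_closure (mem_image_of_mem ι hx)
  have hLP := left_measure_le_of_levyProkhorovEDist_lt h (B := closure (ι '' F))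
    measurableSet_closure
  rw [ENNReal.toReal_ofReal hε.le, thickening_closure,
    Measure.map_apply hι isOpen_thickening.measurableSet, preimage_thickening_image] at hLP
  exact hF.trans hLP

lemma prohorovDist_comap_le_of_levyProkhorovEDist_lt (hι : Measurable ι) {μ ν : Measure α}
    {ε : ℝ} (hε : 0 < ε) (h : levyProkhorovEDist (μ.map ι) (ν.map ι) < ENNReal.ofReal ε) :
    prohorovDist (fun p q => dist (ι p) (ι q)) μ ν ≤ ε :=
  csInf_le ⟨0, fun _ hδ => hδ.1.le⟩ ⟨hε,
    measure_le_measure_comap_thickening_of_levyProkhorovEDist_lt hι hε h,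
    measure_le_measure_comap_thickening_of_levyProkhorovEDist_lt hι hε
      (levyProkhorovEDist_comm (μ.map ι) (ν.map ι) ▸ h)⟩

lemma exists_forall_prohorovDist_comap_le_of_tendsto [SeparableSpace G] (hι : Measurable ι)
    {μs : ℕ → Measure α} {P : ℕ → ProbabilityMeasure G} {ν : ProbabilityMeasure G}
    (hlim : Tendsto P atTop (𝓝 ν)) (hP : ∀ k, (P k : Measure G) = (μs k).map ι)
    {ε : ℝ} (hε : 0 < ε) :
    ∃ N, ∀ k ≥ N, ∀ l ≥ N, prohorovDist (fun p q => dist (ι p) (ι q)) (μs k) (μs l) ≤ ε := by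
  have hcauchy : CauchySeq (LevyProkhorov.ofMeasure ∘ P) :=
    ((LevyProkhorov.continuous_ofMeasure_probabilityMeasure.tendsto ν).comp hlim).cauchySeq
  obtain ⟨N, hN⟩ := Metric.cauchySeq_iff.1 hcauchy ε hε
  refine ⟨N, fun k hk l hl => prohorovDist_comap_le_of_levyProkhorovEDist_lt hι hε ?_⟩
  rw [← hP, ← hP]
  exact (ENNReal.lt_ofReal_iff_toReal_lt (levyProkhorovEDist_ne_top _ _)).2 (hN k hk l hl)

end Prohorov

lemma exists_forall_prohorovDist_empMeas_le {X : Type*} [MetricSpace X]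
    [TopologicalSpace.SeparableSpace X] [MeasurableSpace X] [OpensMeasurableSpace X] {x : ℕ → X}
    {v : ℕ → ℝ} {ρ : ProbabilityMeasure (X × ℝ)}
    (h : Tendsto (fun n => empiricalProbabilityMeasure (fun i => (x i, v i)) (n + 1)) atTop (𝓝 ρ))
    {ε : ℝ} (hε : 0 < ε) :
    ∃ N : ℕ, ∀ k ≥ N, ∀ l ≥ N,
      prohorovDist (fun p q : ℕ × ℝ => max (dist (x p.1) (x q.1)) |p.2 - q.2|)
        (empMeas v (k + 1)) (empMeas v (l + 1)) ≤ ε := by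
  have hι : Measurable fun p : ℕ × ℝ => (x p.1, p.2) :=
    (measurable_from_top.comp measurable_fst).prodMk measurable_snd
  simpa only [Prod.dist_eq, Real.dist_eq] using
    exists_forall_prohorovDist_comap_le_of_tendsto (μs := fun k => empMeas v (k + 1)) hι
      h (fun k => (map_empiricalMeasure hι (fun i => ((i, v i) : ℕ × ℝ)) (k + 1)).symm) hε

theorem stmt14_general {X : Type*} [MetricSpace X]
    [TopologicalSpace.SeparableSpace X] [MeasurableSpace X] [BorelSpace X]
    {Ω : Type*} [MeasurableSpace Ω] (μ : Measure Ω) [IsProbabilityMeasure μ]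
    (m : Measure (X × ℝ≥0)) [IsProbabilityMeasure m]
    (Y : ℕ → Ω → X × ℝ≥0)
    (hmeas : ∀ i, Measurable (Y i))
    (hindep : iIndepFun Y μ)
    (hlaw : ∀ i, Measure.map (Y i) μ = m) :
    ∀ᵐ ω ∂μ,
      (∀ ε : ℝ, 0 < ε → ∃ N : ℕ, ∀ k ≥ N, ∀ l ≥ N,
        prohorovDist (fun p q : ℕ × ℝ => max (dist (Y p.1 ω).1 (Y q.1 ω).1) |p.2 - q.2|)
          (empMeas (fun i => ((Y i ω).2 : ℝ)) (k + 1))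
          (empMeas (fun i => ((Y i ω).2 : ℝ)) (l + 1)) ≤ ε) ∧
      (∀ (d : ℕ) (φ : ((Fin d → Fin d → ℝ) × (Fin d → ℝ)) → ℝ), Continuous φ →
        (∃ C : ℝ, ∀ y, |φ y| ≤ C) →
        Tendsto (fun k : ℕ =>
            (∑ ℓ : Fin d → Fin (k + 1),
              φ (fun a b => dist (Y ((ℓ a : ℕ)) ω).1 (Y ((ℓ b : ℕ)) ω).1,
                 fun a => ((Y ((ℓ a : ℕ)) ω).2 : ℝ))) / ((k + 1 : ℝ) ^ d))
          atTop
          (𝓝 (∫ ω', φ (fun a b => dist (Y (a : ℕ) ω').1 (Y (b : ℕ) ω').1,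

                fun a => ((Y (a : ℕ) ω').2 : ℝ)) ∂μ))) := by
  have : SecondCountableTopology X := UniformSpace.secondCountable_of_separable X
  set T : X × ℝ≥0 → X × ℝ := fun e => (e.1, (e.2 : ℝ))
  have hT : Measurable T :=
    (continuous_fst.prodMk (NNReal.continuous_coe.comp continuous_snd)).measurable
  have : IsProbabilityMeasure (m.map T) := Measure.isProbabilityMeasure_map hT.aemeasurable
  have hpair : Pairwise fun i j => IndepFun (Y i) (Y j) μ := fun i j hij => hindep.indepFun hij
  filter_upwards [ae_tendsto_empiricalProbabilityMeasure hmeas hpair hlaw,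
    ae_tendsto_empiricalProbabilityMeasure (Y := fun i => T ∘ Y i) (fun i => hT.comp (hmeas i))
      (fun i j hij => (hpair hij).comp hT hT)
      (fun i => by rw [← Measure.map_map hT (hmeas i), hlaw])] with ω hY hTY
  refine ⟨fun ε hε => exists_forall_prohorovDist_empMeas_le hTY hε, fun d φ hφ ⟨C, hC⟩ => ?_⟩
  let Φ : BoundedContinuousFunction (Fin d → X × ℝ≥0) ℝ := .ofNormedAddCommGroup
    (fun w => φ (fun a b => dist (w a).1 (w b).1, fun a => ((w a).2 : ℝ))) (by fun_prop) C
    fun w => hC _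
  have hjoint : μ.map (fun ω (a : Fin d) => Y a ω) = Measure.pi fun _ => m := by
    rw [iIndepFun.map_fun_eq_pi_map (fun a : Fin d => (hmeas a).aemeasurable)
      (hindep.precomp Fin.val_injective)]
    simp only [hlaw]
  have h : Tendsto _ _ (𝓝 (∫ w, Φ w ∂(Measure.pi fun _ => m))) :=
    tendsto_sum_div_pow_of_tendsto_empiricalProbabilityMeasure hY d Φ
  rwa [← hjoint, integral_map (by fun_prop) Φ.continuous.aestronglyMeasurable] at h

/-- Sampling an i.i.d. sequence `((x(i),v(i)))` from a marked metric measure space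
`(X,r,m)` and setting `r̃(i,j) = r(x(i),x(j))`: almost surely the empirical measures
`n⁻¹ ∑_{i<n} δ_{(i,v(i))}` converge weakly (equivalently, are Prohorov--Cauchy for the
distance induced by `r̃`), and the resulting marked metric measure space has the same
marked distance matrix distribution as `(X,r,m)`: all the empirical polynomial averages
converge to the corresponding moments of the marked distance matrix distribution. -/
theorem stmt14 {X : Type*} [MetricSpace X] [CompleteSpace X]
    [TopologicalSpace.SeparableSpace X] [MeasurableSpace X] [BorelSpace X]
    {Ω : Type*} [MeasurableSpace Ω] (μ : Measure Ω) [IsProbabilityMeasure μ]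
    (m : Measure (X × ℝ≥0)) [IsProbabilityMeasure m]
    (Y : ℕ → Ω → X × ℝ≥0)
    (hmeas : ∀ i, Measurable (Y i))
    (hindep : iIndepFun Y μ)
    (hlaw : ∀ i, Measure.map (Y i) μ = m) :
    ∀ᵐ ω ∂μ,
      (∀ ε : ℝ, 0 < ε → ∃ N : ℕ, ∀ k ≥ N, ∀ l ≥ N,
        prohorovDist (fun p q : ℕ × ℝ => max (dist (Y p.1 ω).1 (Y q.1 ω).1) |p.2 - q.2|)
          (empMeas (fun i => ((Y i ω).2 : ℝ)) (k + 1))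
          (empMeas (fun i => ((Y i ω).2 : ℝ)) (l + 1)) ≤ ε) ∧
      (∀ (d : ℕ) (φ : ((Fin d → Fin d → ℝ) × (Fin d → ℝ)) → ℝ), Continuous φ →
        (∃ C : ℝ, ∀ y, |φ y| ≤ C) →
        Tendsto (fun k : ℕ =>
            (∑ ℓ : Fin d → Fin (k + 1),
              φ (fun a b => dist (Y ((ℓ a : ℕ)) ω).1 (Y ((ℓ b : ℕ)) ω).1,
                 fun a => ((Y ((ℓ a : ℕ)) ω).2 : ℝ))) / ((k + 1 : ℝ) ^ d))
          atTop
          (𝓝 (∫ ω', φ (fun a b => dist (Y (a : ℕ) ω').1 (Y (b : ℕ) ω').1,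

                fun a => ((Y (a : ℕ) ω').2 : ℝ)) ∂μ))) :=
  stmt14_general μ m Y hmeas hindep hlaw
end

section
/- Let ρ be an exchangeable random semi-ultrametric on ℕ and define the equivalence relation ∼ as above from intervals of mesh < ε. Then almost surely the partition of ℕ induced by ∼ contains no singleton blocks. -/
/-!
Call `i` lonely at level `[a, b)` if `v(i) ∈ [a, b)` but no `j ≠ i` is equivalent to `i` at that
level. Fix `i` and consider, for `j ≠ i`, the event that `j` is lonely at level `[a, b)` while
`ρ(i, j)/2 < b`. Two such events for `j ≠ l` cannot occur together: by the ultrametric inequality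
`ρ(j, l) ≤ max (ρ(j, i), ρ(i, l)) < 2b`, while `ρ(j, l)/2 ≥ v(j) ≥ a`, so `l` would be a partner of
`j`. Exchangeability (a transposition of `j` and `l` fixing `i`) makes these infinitely many
disjoint events equiprobable, so each is null. Transposing `i` and `j` then shows that `i` is a.s.
not lonely, since a lonely `i` has some `j` with `ρ(i, j)/2 ∈ [a, b)`. This replaces the
de Finetti argument.
-/

open MeasureTheory Filter
open scoped Topology

open Set Function

namespace ExchangeableUltrametric

def relabel (p : Equiv.Perm ℕ) (r : ℕ → ℕ → ℝ) : ℕ → ℕ → ℝ := fun x y => r (p x) (p y)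

lemma measurable_relabel (p : Equiv.Perm ℕ) : Measurable (relabel p) := by
  unfold relabel; fun_prop

lemma measurable_extBranch (i : ℕ) : Measurable fun r : ℕ → ℕ → ℝ => extBranch r i := by
  unfold extBranch; fun_prop

lemma extBranch_relabel (p : Equiv.Perm ℕ) (r : ℕ → ℕ → ℝ) (i : ℕ) :
    extBranch (relabel p r) i = extBranch r (p i) := by
  unfold extBranch relabel
  congr 1
  exact (p.subtypeEquiv (p := (· ≠ i)) (q := (· ≠ p i)) fun _ => p.injective.ne_iff.symm).iInf_congr
    fun _ => rfl

lemma extBranch_nonneg {r : ℕ → ℕ → ℝ} (hr : ∀ a b, 0 ≤ r a b) (i : ℕ) : 0 ≤ extBranch r i :=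
  mul_nonneg one_half_pos.le (Real.iInf_nonneg fun j => hr i j)

lemma extBranch_le {r : ℕ → ℕ → ℝ} (hr : ∀ a b, 0 ≤ r a b) {i j : ℕ} (hj : j ≠ i) :
    extBranch r i ≤ r i j / 2 := by
  have : ⨅ l : {l : ℕ // l ≠ i}, r i l ≤ r i j :=
    ciInf_le (f := fun l : {l : ℕ // l ≠ i} => r i l) ⟨0, by rintro _ ⟨l, rfl⟩; exact hr i l⟩
      ⟨j, hj⟩
  unfold extBranch; linarith

lemma exists_lt_of_extBranch_lt {r : ℕ → ℕ → ℝ} {i : ℕ} {c : ℝ} (hc : extBranch r i < c) :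
    ∃ j ≠ i, r i j / 2 < c := by
  have : Nonempty {j : ℕ // j ≠ i} := ⟨⟨i + 1, by omega⟩⟩
  obtain ⟨⟨j, hj⟩, hlt⟩ := exists_lt_of_ciInf_lt (f := fun j : {j : ℕ // j ≠ i} => r i j)
    (a := 2 * c) (by unfold extBranch at hc; linarith)
  exact ⟨j, hj, by simp only at hlt; linarith⟩

def IsPartner (a b : ℝ) (r : ℕ → ℕ → ℝ) (i j : ℕ) : Prop :=
  extBranch r i ∈ Ico a b ∧ extBranch r j ∈ Ico a b ∧ r i j / 2 ∈ Ico a b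

def IsLonely (a b : ℝ) (r : ℕ → ℕ → ℝ) (i : ℕ) : Prop :=
  extBranch r i ∈ Ico a b ∧ ∀ j ≠ i, ¬IsPartner a b r i j

lemma measurableSet_isLonely (a b : ℝ) (i : ℕ) : MeasurableSet {r | IsLonely a b r i} := by
  have hv := measurable_extBranch
  have hI := measurableSet_Ico (a := a) (b := b)
  unfold IsLonely IsPartner
  refine Measurable.setOf ?_
  fun_prop

lemma isLonely_relabel (a b : ℝ) (p : Equiv.Perm ℕ) (r : ℕ → ℕ → ℝ) (i : ℕ) :
    IsLonely a b (relabel p r) i ↔ IsLonely a b r (p i) := by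
  simp only [IsLonely, IsPartner, extBranch_relabel, relabel]
  refine and_congr_right fun _ => ?_
  exact p.forall_congr fun j => by rw [p.injective.ne_iff]

lemma eq_of_isLonely {a b : ℝ} {r : ℕ → ℕ → ℝ} (hnn : ∀ x y, 0 ≤ r x y)
    (hsymm : ∀ x y, r x y = r y x) (hultra : ∀ x y z, r x y ≤ max (r x z) (r z y))
    {i j l : ℕ} (hj : IsLonely a b r j) (hl : IsLonely a b r l)
    (hij : r i j / 2 < b) (hil : r i l / 2 < b) : j = l := by
  by_contra hne
  refine hj.2 l (Ne.symm hne) ⟨hj.1, hl.1, hj.1.1.trans (extBranch_le hnn (Ne.symm hne)), ?_⟩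
  have := hultra j l i
  rw [hsymm j i] at this
  have : max (r i j) (r i l) < 2 * b := max_lt (by linarith) (by linarith)
  linarith

lemma exists_dist_mem_Ico_of_isLonely {a b : ℝ} {r : ℕ → ℕ → ℝ} (hnn : ∀ x y, 0 ≤ r x y)
    {i : ℕ} (hi : IsLonely a b r i) : ∃ j ≠ i, r i j / 2 ∈ Ico a b := by
  obtain ⟨j, hj, hlt⟩ := exists_lt_of_extBranch_lt hi.1.2
  exact ⟨j, hj, hi.1.1.trans (extBranch_le hnn hj), hlt⟩

def lonelyNear (a b : ℝ) (i j : ℕ) : Set (ℕ → ℕ → ℝ) :=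
  {r | IsLonely a b r j ∧ r i j / 2 ∈ Ico a b}

lemma measurableSet_lonelyNear (a b : ℝ) (i j : ℕ) : MeasurableSet (lonelyNear a b i j) :=
  (measurableSet_isLonely a b j).inter (measurableSet_Ico.preimage (by fun_prop))

lemma relabel_preimage_lonelyNear (a b : ℝ) (p : Equiv.Perm ℕ) (i j : ℕ) :
    relabel p ⁻¹' lonelyNear a b i j = lonelyNear a b (p i) (p j) := by
  ext r
  simp only [lonelyNear, mem_preimage, mem_ofPred_eq, isLonely_relabel]
  rfl

lemma measure_eq_zero_of_pairwise_disjoint_of_measure_eq {α ι : Type*} [MeasurableSpace α]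
    {μ : Measure α} [IsFiniteMeasure μ] [Infinite ι] {s : ι → Set α}
    (hs : ∀ i, MeasurableSet (s i)) (hdisj : Pairwise (Disjoint on s))
    (heq : ∀ i j, μ (s i) = μ (s j)) (i : ι) : μ (s i) = 0 := by
  by_contra hpos
  have := tsum_meas_le_meas_iUnion_of_disjoint μ hs hdisj
  rw [tsum_congr fun j => heq j i, ENNReal.tsum_const_eq_top_of_ne_zero hpos] at this
  exact measure_ne_top μ _ (top_le_iff.1 this)

lemma measure_preimage_relabel {Ω : Type*} [MeasurableSpace Ω] {μ : Measure Ω}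
    {ρ : Ω → ℕ → ℕ → ℝ} (hmeas : Measurable ρ) {p : Equiv.Perm ℕ}
    (hp : μ.map (fun ω => relabel p (ρ ω)) = μ.map ρ) {S : Set (ℕ → ℕ → ℝ)}
    (hS : MeasurableSet S) : μ (ρ ⁻¹' (relabel p ⁻¹' S)) = μ (ρ ⁻¹' S) := by
  rw [← Measure.map_apply hmeas hS, ← hp, Measure.map_apply (f := fun ω => relabel p (ρ ω))
    ((measurable_relabel p).comp hmeas) hS]
  rfl

theorem measure_isLonely_eq_zero {Ω : Type*} [MeasurableSpace Ω] (μ : Measure Ω)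
    [IsFiniteMeasure μ] (ρ : Ω → ℕ → ℕ → ℝ) (hmeas : Measurable ρ)
    (hnn : ∀ ω x y, 0 ≤ ρ ω x y) (hsymm : ∀ ω x y, ρ ω x y = ρ ω y x)
    (hultra : ∀ ω x y z, ρ ω x y ≤ max (ρ ω x z) (ρ ω z y))
    (hswap : ∀ j l, μ.map (fun ω => relabel (Equiv.swap j l) (ρ ω)) = μ.map ρ)
    (a b : ℝ) (i : ℕ) : μ {ω | IsLonely a b (ρ ω) i} = 0 := by
  have hswap_near : ∀ j l k, μ (ρ ⁻¹' lonelyNear a b (Equiv.swap j l k) (Equiv.swap j l j)) =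
      μ (ρ ⁻¹' lonelyNear a b k j) := fun j l k => by
    rw [← relabel_preimage_lonelyNear,
      measure_preimage_relabel hmeas (hswap j l) (measurableSet_lonelyNear a b k j)]
  have : Infinite {j : ℕ // j ≠ i} := infinite_coe_iff.2 (Set.finite_singleton i).infinite_compl
  have hnear_null : ∀ j : {j : ℕ // j ≠ i}, μ (ρ ⁻¹' lonelyNear a b i j) = 0 := by
    refine measure_eq_zero_of_pairwise_disjoint_of_measure_eq
      (fun j => hmeas (measurableSet_lonelyNear a b i j)) ?_ fun ⟨j, hj⟩ ⟨l, hl⟩ => ?_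
    · rintro ⟨j, _⟩ ⟨l, _⟩ hne
      refine disjoint_left.2 fun ω hωj hωl => hne (Subtype.ext ?_)
      exact eq_of_isLonely (hnn ω) (hsymm ω) (hultra ω) hωj.1 hωl.1 hωj.2.2 hωl.2.2
    · have := hswap_near l j i
      rwa [Equiv.swap_apply_of_ne_of_ne hl.symm hj.symm, Equiv.swap_apply_left] at this
  have hcover : {ω | IsLonely a b (ρ ω) i} ⊆ ⋃ j : {j : ℕ // j ≠ i}, ρ ⁻¹' lonelyNear a b j i := by
    intro ω hω
    obtain ⟨j, hj, hdist⟩ := exists_dist_mem_Ico_of_isLonely (hnn ω) hω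
    exact mem_iUnion.2 ⟨⟨j, hj⟩, hω, hsymm ω j i ▸ hdist⟩
  refine measure_mono_null hcover (measure_iUnion_null fun j => ?_)
  have := hswap_near j i i
  rw [Equiv.swap_apply_left, Equiv.swap_apply_right] at this
  exact this.trans (hnear_null j)

lemma exists_mem_Ico_of_le_of_lt {α : Type*} [LinearOrder α] {f : ℕ → α} {x : α} {N : ℕ}
    (h0 : f 0 ≤ x) (hN : x < f N) : ∃ n, x ∈ Ico (f n) (f (n + 1)) := by
  by_contra H
  simp only [not_exists, mem_Ico, not_and, not_lt] at H
  have hle : ∀ n, f n ≤ x := fun n => Nat.rec h0 (fun n ih => H n ih) n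
  exact (hle N).not_gt hN

end ExchangeableUltrametric

open ExchangeableUltrametric in
theorem stmt18_general {Ω : Type*} [MeasurableSpace Ω] (μ : Measure Ω) [IsProbabilityMeasure μ]
    (ρ : Ω → ℕ → ℕ → ℝ) (hmeas : Measurable ρ)
    (hsemi : ∀ ω, (∀ i, ρ ω i i = 0) ∧ (∀ i j, 0 ≤ ρ ω i j) ∧ (∀ i j, ρ ω i j = ρ ω j i) ∧
      ∀ i j k, ρ ω i j ≤ max (ρ ω i k) (ρ ω k j))
    (hexch : ∀ p : Equiv.Perm ℕ, {i | p i ≠ i}.Finite →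
      Measure.map (fun ω => fun i j => ρ ω (p i) (p j)) μ = Measure.map ρ μ)
    (h : ℕ → ℝ) (h0 : h 0 = 0)
    (htop : Tendsto h atTop atTop) :
    ∀ᵐ ω ∂μ, ∀ i : ℕ, ∃ j : ℕ, j ≠ i ∧ ∃ k : ℕ,
      extBranch (ρ ω) i ∈ Set.Ico (h k) (h (k + 1)) ∧
      extBranch (ρ ω) j ∈ Set.Ico (h k) (h (k + 1)) ∧
      ρ ω i j / 2 ∈ Set.Ico (h k) (h (k + 1)) := by
  have hnn ω := (hsemi ω).2.1
  have hswap j l : μ.map (fun ω => relabel (Equiv.swap j l) (ρ ω)) = μ.map ρ :=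
    hexch _ ((toFinite {j, l}).subset fun _ hx => (Equiv.swap_apply_ne_self_iff.1 hx).2)
  have hnull : μ (⋃ i, ⋃ k, {ω | IsLonely (h k) (h (k + 1)) (ρ ω) i}) = 0 :=
    measure_iUnion_null fun i => measure_iUnion_null fun k =>
      measure_isLonely_eq_zero μ ρ hmeas hnn (fun ω => (hsemi ω).2.2.1)
        (fun ω => (hsemi ω).2.2.2) hswap _ _ i
  refine measure_mono_null (fun ω hω => ?_) hnull
  obtain ⟨i, hi⟩ := not_forall.1 hω
  obtain ⟨N, hN⟩ := (htop.eventually_gt_atTop (extBranch (ρ ω) i)).exists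
  obtain ⟨k, hk⟩ := exists_mem_Ico_of_le_of_lt (h0 ▸ extBranch_nonneg (hnn ω) i) hN
  exact mem_iUnion₂.2 ⟨i, k, hk, fun j hj hpartner => hi ⟨j, hj, k, hpartner⟩⟩

/-- For an exchangeable random semi-ultrametric `ρ` on `ℕ` and the equivalence relation
built from intervals `[h_k, h_{k+1})` of mesh `< ε` (with `P(v(i) = h_k) = 0`), almost
surely the induced partition of `ℕ` contains no singleton blocks. -/
theorem stmt18 {Ω : Type*} [MeasurableSpace Ω] (μ : Measure Ω) [IsProbabilityMeasure μ]
    (ρ : Ω → ℕ → ℕ → ℝ) (hmeas : Measurable ρ)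
    (hsemi : ∀ ω, (∀ i, ρ ω i i = 0) ∧ (∀ i j, 0 ≤ ρ ω i j) ∧ (∀ i j, ρ ω i j = ρ ω j i) ∧
      ∀ i j k, ρ ω i j ≤ max (ρ ω i k) (ρ ω k j))
    (hexch : ∀ p : Equiv.Perm ℕ, {i | p i ≠ i}.Finite →
      Measure.map (fun ω => fun i j => ρ ω (p i) (p j)) μ = Measure.map ρ μ)
    (ε : ℝ) (hε : 0 < ε)
    (h : ℕ → ℝ) (h0 : h 0 = 0) (hmono : StrictMono h)
    (htop : Tendsto h atTop atTop)
    (h1 : h 1 < ε) (hgap : ∀ k, h (k + 1) - h k < ε)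
    (hatom : ∀ i k, μ {ω | extBranch (ρ ω) i = h k} = 0) :
    ∀ᵐ ω ∂μ, ∀ i : ℕ, ∃ j : ℕ, j ≠ i ∧ ∃ k : ℕ,
      extBranch (ρ ω) i ∈ Set.Ico (h k) (h (k + 1)) ∧
      extBranch (ρ ω) j ∈ Set.Ico (h k) (h (k + 1)) ∧
      ρ ω i j / 2 ∈ Set.Ico (h k) (h (k + 1)) :=
  stmt18_general μ ρ hmeas hsemi hexch h h0 htop
end
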